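/- arXiv:math/0611933 — 5 statements merged into one kernel-verified Lean document; each statement's English description precedes it below -/
import Mathlib

section
/- Let T be a bounded linear operator on a complex Hilbert space H and let 0 < δ < 1. Let g and g' be unit vectors in H such that Tg ≠ 0, the two-dimensional families are block-orthogonal (i.e. each of g and Tg is orthogonal to each of g' and Tg'), and ‖Tg'‖ ≤ (δ²/10)‖Tg‖. Set h := (δ/2) g + √(1 − δ²/4) g'. Then ‖h‖ = 1, Th ≠ 0, and |⟨h, Th⟩| < δ ‖Th‖; in particular h is not a δ-quasi-eigenvector of T. -/
set_option maxHeartbeats 1000000 in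
/-- Construction of a non-`δ`-quasi-eigenvector: if `g, g'` are unit vectors with
`{g, Tg} ⊥ {g', Tg'}`, `Tg ≠ 0` and `‖Tg'‖ ≤ (δ²/10)‖Tg‖`, then
`h = (δ/2)g + √(1-δ²/4) g'` is a unit vector with `Th ≠ 0` and
`|⟨h, Th⟩| < δ‖Th‖`, i.e. `h` is not a `δ`-quasi-eigenvector of `T`. -/
theorem stmt_4 {H : Type*} [NormedAddCommGroup H] [InnerProductSpace ℂ H]
    (T : H →L[ℂ] H) (δ : ℝ) (hδ0 : 0 < δ) (hδ1 : δ < 1)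
    (g g' : H) (hg : ‖g‖ = 1) (hg' : ‖g'‖ = 1) (hTg : T g ≠ 0)
    (h1 : (inner ℂ g g' : ℂ) = 0) (h2 : (inner ℂ g (T g') : ℂ) = 0)
    (h3 : (inner ℂ (T g) g' : ℂ) = 0) (h4 : (inner ℂ (T g) (T g') : ℂ) = 0)
    (hsmall : ‖T g'‖ ≤ δ ^ 2 / 10 * ‖T g‖)
    (h : H) (hh : h = ((δ / 2 : ℝ) : ℂ) • g + ((Real.sqrt (1 - δ ^ 2 / 4) : ℝ) : ℂ) • g') :
    ‖h‖ = 1 ∧ T h ≠ 0 ∧ ‖(inner ℂ h (T h) : ℂ)‖ < δ * ‖T h‖ := by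
  set a : ℝ := δ / 2 with ha
  set b : ℝ := Real.sqrt (1 - δ ^ 2 / 4) with hb
  have ha0 : 0 < a := by positivity
  have h1sub : (0:ℝ) ≤ 1 - δ ^ 2 / 4 := by nlinarith
  have hb2 : b ^ 2 = 1 - δ ^ 2 / 4 := Real.sq_sqrt h1sub
  have hb0 : 0 ≤ b := Real.sqrt_nonneg _
  clear_value a b
  have hab : a ^ 2 + b ^ 2 = 1 := by rw [hb2, ha]; ring
  have hTg0 : 0 < ‖T g‖ := norm_pos_iff.mpr hTg
  have hinz : (inner ℂ (((a:ℂ)) • g) (((b:ℂ)) • g') : ℂ) = 0 := by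
    rw [inner_smul_left, inner_smul_right, h1]; ring
  have hnag : ‖((a:ℂ)) • g‖ = a := by
    rw [norm_smul, hg]; simp [abs_of_pos ha0]
  have hnbg : ‖((b:ℂ)) • g'‖ = b := by
    rw [norm_smul, hg']; simp [abs_of_nonneg hb0]
  have hnaTg : ‖((a:ℂ)) • T g‖ = a * ‖T g‖ := by
    rw [norm_smul]; simp [abs_of_pos ha0]
  have hnbTg : ‖((b:ℂ)) • T g'‖ = b * ‖T g'‖ := by
    rw [norm_smul]; simp [abs_of_nonneg hb0]
  -- ‖h‖ = 1
  have hnh : ‖h‖ = 1 := by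
    have key := norm_add_sq_eq_norm_sq_add_norm_sq_of_inner_eq_zero _ _ hinz
    rw [hnag, hnbg] at key
    rw [hh]
    nlinarith [norm_nonneg (((a:ℂ)) • g + ((b:ℂ)) • g')]
  -- T h
  have hTh : T h = ((a:ℂ)) • T g + ((b:ℂ)) • T g' := by
    rw [hh]; simp
  have hinz' : (inner ℂ (((a:ℂ)) • T g) (((b:ℂ)) • T g') : ℂ) = 0 := by
    rw [inner_smul_left, inner_smul_right, h4]; ring
  have hnTh2 : ‖T h‖ ^ 2 = (a * ‖T g‖) ^ 2 + (b * ‖T g'‖) ^ 2 := by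
    rw [hTh, pow_two, norm_add_sq_eq_norm_sq_add_norm_sq_of_inner_eq_zero _ _ hinz',
      hnaTg, hnbTg]
    ring
  have hTha : a * ‖T g‖ ≤ ‖T h‖ := by
    nlinarith [norm_nonneg (T h), sq_nonneg (b * ‖T g'‖), mul_pos ha0 hTg0]
  have hTh0 : T h ≠ 0 := by
    intro h0
    rw [h0, norm_zero] at hTha
    nlinarith [mul_pos ha0 hTg0]
  refine ⟨hnh, hTh0, ?_⟩
  have h3' : (inner ℂ g' (T g) : ℂ) = 0 := by
    rw [← inner_conj_symm, h3, map_zero]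
  have hinner : (inner ℂ h (T h) : ℂ)
      = ((a:ℂ))^2 * inner ℂ g (T g) + ((b:ℂ))^2 * inner ℂ g' (T g') := by
    rw [hh, map_add, ContinuousLinearMap.map_smul, ContinuousLinearMap.map_smul]
    simp only [inner_add_left, inner_add_right, inner_smul_left, inner_smul_right,
      h2, h3', Complex.conj_ofReal, mul_zero, add_zero, zero_add]
    ring
  have habs : ‖(inner ℂ h (T h) : ℂ)‖ ≤ a^2 * ‖T g‖ + b^2 * ‖T g'‖ := by
    rw [hinner]
    calc ‖((a:ℂ))^2 * inner ℂ g (T g) + ((b:ℂ))^2 * inner ℂ g' (T g')‖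
        ≤ ‖((a:ℂ))^2 * inner ℂ g (T g)‖
          + ‖((b:ℂ))^2 * inner ℂ g' (T g')‖ := norm_add_le _ _
      _ = a^2 * ‖(inner ℂ g (T g) : ℂ)‖
          + b^2 * ‖(inner ℂ g' (T g') : ℂ)‖ := by
          rw [norm_mul, norm_mul, ← Complex.ofReal_pow, ← Complex.ofReal_pow,
            Complex.norm_real, Complex.norm_real, Real.norm_eq_abs, Real.norm_eq_abs,
            abs_of_nonneg (sq_nonneg a), abs_of_nonneg (sq_nonneg b)]
      _ ≤ a^2 * ‖T g‖ + b^2 * ‖T g'‖ := by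
          have c1 : ‖(inner ℂ g (T g) : ℂ)‖ ≤ ‖T g‖ := by
            have := norm_inner_le_norm (𝕜 := ℂ) g (T g)
            simpa [hg] using this
          have c2 : ‖(inner ℂ g' (T g') : ℂ)‖ ≤ ‖T g'‖ := by
            have := norm_inner_le_norm (𝕜 := ℂ) g' (T g')
            simpa [hg'] using this
          nlinarith [sq_nonneg a, sq_nonneg b]
  have hb2le : b^2 ≤ 1 := by nlinarith
  calc ‖(inner ℂ h (T h) : ℂ)‖ ≤ a^2 * ‖T g‖ + b^2 * ‖T g'‖ := habs
    _ < δ * (a * ‖T g‖) := by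
        have hc : b^2 * ‖T g'‖ ≤ δ^2/10 * ‖T g‖ := by nlinarith [norm_nonneg (T g')]
        have ha2 : a^2 = δ^2/4 := by rw [ha]; ring
        have hda : δ * a = δ^2/2 := by rw [ha]; ring
        nlinarith [mul_pos (mul_pos hδ0 hδ0) hTg0]
    _ ≤ δ * ‖T h‖ := by nlinarith
end

section
/- Let T be a bounded injective linear operator with dense range on an infinite-dimensional complex Hilbert space H, and suppose T is not surjective (equivalently, the inverse of T is an unbounded operator). Then there exists an orthonormal sequence (e_n) in H such that ‖T e_n‖ → 0 as n → ∞. -/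
open Filter Topology

local notation "⟪" x ", " y "⟫" => @inner ℂ _ _ x y

/-- A sequence of finite-dimensional subspaces built from a choice function. -/
noncomputable def auxSeq {H : Type*} [NormedAddCommGroup H] [InnerProductSpace ℂ H]
    (pick : {V : Submodule ℂ H // FiniteDimensional ℂ V} → ℕ → H) :
    ℕ → {V : Submodule ℂ H // FiniteDimensional ℂ V}
  | 0 => ⟨⊥, inferInstance⟩
  | n + 1 =>
    ⟨(auxSeq pick n).1 ⊔ (ℂ ∙ pick (auxSeq pick n) n), by
      haveI := (auxSeq pick n).2; infer_instance⟩

/-- Key lemma: if `T` has dense range and is not surjective, then for any finite-dimensional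
subspace `V` and any `ε > 0` there is a unit vector orthogonal to `V` with `‖T x‖ < ε`. -/
theorem key_lemma {H : Type*} [NormedAddCommGroup H] [InnerProductSpace ℂ H] [CompleteSpace H]
    (T : H →L[ℂ] H) (hdr : DenseRange (T : H → H))
    (hns : ¬ Function.Surjective (T : H → H))
    (V : Submodule ℂ H) [FiniteDimensional ℂ V] {ε : ℝ} (hε : 0 < ε) :
    ∃ x, x ∈ Vᗮ ∧ ‖x‖ = 1 ∧ ‖T x‖ < ε := by
  by_contra hcon
  push_neg at hcon
  -- `T` is bounded below on `Vᗮ`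
  have hb : ∀ x ∈ Vᗮ, ε * ‖x‖ ≤ ‖T x‖ := by
    intro x hx
    rcases eq_or_ne x 0 with rfl | hx0
    · simp
    · have hnx : ‖x‖ ≠ 0 := norm_ne_zero_iff.mpr hx0
      have hy : (‖x‖⁻¹ : ℂ) • x ∈ Vᗮ := Vᗮ.smul_mem _ hx
      have hyn : ‖(‖x‖⁻¹ : ℂ) • x‖ = 1 := by
        rw [norm_smul]
        simp [abs_of_nonneg (norm_nonneg x), hnx]
      have := hcon _ hy hyn
      rw [map_smul, norm_smul] at this
      simp only [Complex.norm_real, norm_inv, Complex.norm_real, Real.norm_eq_abs,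
        abs_of_nonneg (norm_nonneg x)] at this
      have h2 : ε ≤ ‖x‖⁻¹ * ‖T x‖ := by simpa using this
      calc ε * ‖x‖ ≤ (‖x‖⁻¹ * ‖T x‖) * ‖x‖ := by
            exact mul_le_mul_of_nonneg_right h2 (norm_nonneg x)
        _ = ‖T x‖ := by field_simp
  -- hence `T (Vᗮ)` is closed
  set f : Vᗮ →L[ℂ] H := T.comp Vᗮ.subtypeL with hf_def
  have hfb : ∀ z : Vᗮ, ‖z‖ ≤ ((ε.toNNReal⁻¹ : NNReal) : ℝ) * ‖f z‖ := by
    intro z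
    have h1 : ε * ‖(z : H)‖ ≤ ‖T (z : H)‖ := hb _ z.2
    have h2 : ((ε.toNNReal⁻¹ : NNReal) : ℝ) = ε⁻¹ := by
      rw [NNReal.coe_inv, Real.coe_toNNReal _ hε.le]
    rw [h2]
    have h3 : ‖(z : H)‖ ≤ ε⁻¹ * ‖T (z : H)‖ := (le_inv_mul_iff₀ hε).mpr h1
    simpa [hf_def] using h3
  have hanti : AntilipschitzWith (ε.toNNReal⁻¹) f := f.antilipschitz_of_bound hfb
  have hWclosed : IsClosed ((Submodule.map (T : H →ₗ[ℂ] H) Vᗮ : Submodule ℂ H) : Set H) := by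
    have hr : Set.range f = ((Submodule.map (T : H →ₗ[ℂ] H) Vᗮ : Submodule ℂ H) : Set H) := by
      ext y
      simp only [Set.mem_range, SetLike.mem_coe, Submodule.mem_map]
      constructor
      · rintro ⟨⟨x, hx⟩, rfl⟩; exact ⟨x, hx, rfl⟩
      · rintro ⟨x, hx, rfl⟩; exact ⟨⟨x, hx⟩, rfl⟩
    rw [← hr]
    exact hanti.isClosed_range f.uniformContinuous
  set W : Submodule ℂ H := Submodule.map (T : H →ₗ[ℂ] H) Vᗮ with hW_def
  haveI : CompleteSpace W := hWclosed.completeSpace_coe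
  -- projection onto `Wᗮ` has kernel `W`
  set P : H →L[ℂ] H := (Wᗮ).subtypeL.comp (Submodule.orthogonalProjectionOnto Wᗮ) with hP_def
  have hkerP : LinearMap.ker (P : H →ₗ[ℂ] H) = W := by
    ext x
    simp only [hP_def, LinearMap.mem_ker, ContinuousLinearMap.coe_comp',
      Function.comp_apply, Submodule.coe_subtypeL', Submodule.coe_subtype,
      ContinuousLinearMap.coe_coe, ContinuousLinearMap.comp_apply, Submodule.subtypeL_apply]
    rw [show ((Submodule.orthogonalProjectionOnto Wᗮ x : Wᗮ) : H) = 0 ↔ Submodule.orthogonalProjectionOnto Wᗮ x = 0 by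
      exact_mod_cast Submodule.coe_eq_zero]
    rw [Submodule.orthogonalProjectionOnto_eq_zero_iff, Submodule.orthogonal_orthogonal]
  haveI hfd1 : FiniteDimensional ℂ (Submodule.map (T : H →ₗ[ℂ] H) V) := Module.Finite.map V (T : H →ₗ[ℂ] H)
  haveI hfd2 : FiniteDimensional ℂ (Submodule.map (P : H →ₗ[ℂ] H) (Submodule.map (T : H →ₗ[ℂ] H) V)) :=
    Module.Finite.map (Submodule.map (T : H →ₗ[ℂ] H) V) (P : H →ₗ[ℂ] H)
  -- `map T V ⊔ W` is closed
  have hsupclosed : IsClosed ((Submodule.map (T : H →ₗ[ℂ] H) V ⊔ W : Submodule ℂ H) : Set H) := by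
    have hcm : Submodule.comap (P : H →ₗ[ℂ] H) (Submodule.map (P : H →ₗ[ℂ] H) (Submodule.map (T : H →ₗ[ℂ] H) V))
        = Submodule.map (T : H →ₗ[ℂ] H) V ⊔ W := by
      rw [Submodule.comap_map_eq, hkerP]
    have : ((Submodule.map (T : H →ₗ[ℂ] H) V ⊔ W : Submodule ℂ H) : Set H)
        = P ⁻¹' ((Submodule.map (P : H →ₗ[ℂ] H) (Submodule.map (T : H →ₗ[ℂ] H) V) : Submodule ℂ H) : Set H) := by
      rw [← hcm]; rfl
    rw [this]
    exact (Submodule.closed_of_finiteDimensional _).preimage P.continuous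
  -- hence range of `T` is closed, so by density `T` is surjective, contradiction
  have hrange : Set.range (T : H → H) = ((Submodule.map (T : H →ₗ[ℂ] H) V ⊔ W : Submodule ℂ H) : Set H) := by
    have h1 : (⊤ : Submodule ℂ H) = V ⊔ Vᗮ := (Submodule.sup_orthogonal_of_hasOrthogonalProjection).symm
    have h2 : LinearMap.range (T : H →ₗ[ℂ] H) = Submodule.map (T : H →ₗ[ℂ] H) V ⊔ W := by
      rw [← Submodule.map_top, h1, Submodule.map_sup, hW_def]
    rw [← h2]; rfl
  apply hns
  intro y
  have hy : y ∈ Set.range (T : H → H) := by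
    have : closure (Set.range (T : H → H)) = Set.range (T : H → H) := by
      rw [hrange]; exact hsupclosed.closure_eq
    have huniv := hdr.closure_range
    rw [this] at huniv
    rw [huniv]; trivial
  exact hy

/-- If `T` is a bounded injective operator with dense range on an infinite-dimensional
complex Hilbert space which is not surjective, then there is an orthonormal sequence
`(eₙ)` with `‖T eₙ‖ → 0`. -/
theorem stmt_5 {H : Type*} [NormedAddCommGroup H] [InnerProductSpace ℂ H] [CompleteSpace H]
    (hinf : ¬ FiniteDimensional ℂ H)
    (T : H →L[ℂ] H) (hinj : Function.Injective T) (hdr : DenseRange (T : H → H))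
    (hns : ¬ Function.Surjective (T : H → H)) :
    ∃ e : ℕ → H, Orthonormal ℂ e ∧ Tendsto (fun n : ℕ => ‖T (e n)‖) atTop (𝓝 0) := by
  have key' : ∀ (V : {V : Submodule ℂ H // FiniteDimensional ℂ V}) (n : ℕ),
      ∃ x, x ∈ V.1ᗮ ∧ ‖x‖ = 1 ∧ ‖T x‖ < 1 / (n + 1 : ℝ) := by
    intro V n
    haveI := V.2
    exact key_lemma T hdr hns V.1 (by positivity)
  choose pick hpick using key'
  set st := auxSeq pick with hst
  set e : ℕ → H := fun n => pick (st n) n with he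
  have hstep : ∀ n, (st (n + 1)).1 = (st n).1 ⊔ (ℂ ∙ e n) := fun n => rfl
  have hmono : Monotone fun n => (st n).1 :=
    monotone_nat_of_le_succ fun n => by rw [hstep]; exact le_sup_left
  have hmem : ∀ n, e n ∈ (st (n + 1)).1 := by
    intro n
    rw [hstep]
    exact Submodule.mem_sup_right (Submodule.mem_span_singleton_self _)
  have horth : ∀ m n, m < n → ⟪e m, e n⟫ = 0 := by
    intro m n hmn
    have h1 : e m ∈ (st n).1 := hmono hmn (hmem m)
    have h2 : e n ∈ (st n).1ᗮ := (hpick (st n) n).1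
    exact h2 (e m) h1
  refine ⟨e, ⟨fun n => (hpick (st n) n).2.1, ?_⟩, ?_⟩
  · intro i j hij
    rcases lt_or_gt_of_ne hij with h | h
    · exact horth i j h
    · rw [inner_eq_zero_symm]
      exact horth j i h
  · apply squeeze_zero (fun n => norm_nonneg _)
      (fun n => le_of_lt (hpick (st n) n).2.2)
    exact tendsto_one_div_add_atTop_nhds_zero_nat
end

section
/- Let T be a bounded injective linear operator with dense range on an infinite-dimensional complex Hilbert space H, suppose T is not surjective, and fix 0 < δ < 1. Then there exists a sequence (h_n) in H such that: (a) ‖h_n‖ = 1 for all n; (b) span{h_j, T h_j} is orthogonal to span{h_k, T h_k} for all j ≠ k; (c) ‖T h_n‖ → 0 as n → ∞; and (d) no h_n is a δ-quasi-eigenvector of T, i.e. |⟨h_n, T h_n⟩| < δ ‖T h_n‖ for every n. -/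
open Filter Topology

section Aux

variable {H : Type*} [NormedAddCommGroup H] [InnerProductSpace ℂ H] [CompleteSpace H]

lemma aux_isClosed_sup (M N : Submodule ℂ H) (hM : IsClosed (M : Set H))
    [FiniteDimensional ℂ N] : IsClosed ((M ⊔ N : Submodule ℂ H) : Set H) := by
  haveI : IsClosed (M : Set H) := hM
  have hmk : Continuous M.mkQ :=
    AddMonoidHomClass.continuous_of_bound M.mkQ 1 fun x => by
      simpa using Submodule.Quotient.norm_mk_le M x
  haveI : FiniteDimensional ℂ (N.map M.mkQ) := Module.Finite.map N M.mkQ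
  have h1 : M ⊔ N = Submodule.comap M.mkQ (N.map M.mkQ) := by
    rw [Submodule.comap_map_eq, Submodule.ker_mkQ, sup_comm]
  rw [h1]
  exact (Submodule.closed_of_finiteDimensional (N.map M.mkQ)).preimage hmk

lemma aux_exists_small (T : H →L[ℂ] H) (hdr : DenseRange (T : H → H))
    (hns : ¬ Function.Surjective (T : H → H))
    (F : Submodule ℂ H) [FiniteDimensional ℂ F] {ε : ℝ} (hε : 0 < ε) :
    ∃ x : H, ‖x‖ = 1 ∧ x ∈ Fᗮ ∧ ‖T x‖ < ε := by
  by_contra hcon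
  push_neg at hcon
  haveI : CompleteSpace ↥Fᗮ := (Submodule.isClosed_orthogonal F).completeSpace_coe
  set g : ↥Fᗮ →L[ℂ] H := T.comp (Fᗮ).subtypeL with hg
  have hbound : ∀ y : ↥Fᗮ, ‖y‖ ≤ (ε⁻¹.toNNReal : ℝ) * ‖g y‖ := by
    intro y
    rcases eq_or_ne (y : H) 0 with hy | hy
    · have : ‖y‖ = 0 := by simpa [Submodule.coe_norm] using congrArg norm hy
      simp [this]
      positivity
    · set u : H := ((‖(y : H)‖⁻¹ : ℝ) : ℂ) • (y : H) with hu
      have hny : (0:ℝ) < ‖(y : H)‖ := norm_pos_iff.2 hy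
      have hun : ‖u‖ = 1 := by
        rw [hu, norm_smul]
        simp [abs_of_pos (inv_pos.2 hny), inv_mul_cancel₀ hny.ne']
      have huF : u ∈ Fᗮ := Submodule.smul_mem _ _ y.2
      have := hcon u hun huF
      have hTu : ‖T u‖ = ‖(y:H)‖⁻¹ * ‖T (y:H)‖ := by
        rw [hu, map_smul, norm_smul]
        simp [abs_of_pos (inv_pos.2 hny)]
      rw [hTu] at this
      have hinv : (ε⁻¹.toNNReal : ℝ) = ε⁻¹ := Real.coe_toNNReal _ (inv_pos.2 hε).le
      rw [hinv]
      have hgy : ‖g y‖ = ‖T (y:H)‖ := rfl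
      rw [hgy]
      have h2 : ε * ‖(y:H)‖ ≤ ‖T (y:H)‖ := by
        have h3 := mul_le_mul_of_nonneg_right this hny.le
        rwa [mul_comm (‖(y:H)‖⁻¹) _, mul_assoc, inv_mul_cancel₀ hny.ne', mul_one] at h3
      calc ‖y‖ = ε⁻¹ * (ε * ‖(y:H)‖) := by
            show ‖(y:H)‖ = _
            field_simp
        _ ≤ ε⁻¹ * ‖T (y:H)‖ := mul_le_mul_of_nonneg_left h2 (inv_pos.2 hε).le
  have hanti : AntilipschitzWith ε⁻¹.toNNReal g :=
    ContinuousLinearMap.antilipschitz_of_bound g hbound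
  have hclg : IsClosed (Set.range g) := hanti.isClosed_range g.uniformContinuous
  have hrange : Set.range (g : ↥Fᗮ → H) = ((Fᗮ.map (T : H →ₗ[ℂ] H)) : Set H) := by
    ext z
    constructor
    · rintro ⟨y, rfl⟩
      exact ⟨y, y.2, rfl⟩
    · rintro ⟨w, hw, rfl⟩
      exact ⟨⟨w, hw⟩, rfl⟩
  have hcl1 : IsClosed ((Fᗮ.map (T : H →ₗ[ℂ] H)) : Set H) := hrange ▸ hclg
  haveI : FiniteDimensional ℂ (F.map (T : H →ₗ[ℂ] H)) := Module.Finite.map F _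
  have htop : F ⊔ Fᗮ = ⊤ := Submodule.sup_orthogonal_of_hasOrthogonalProjection
  have hr : LinearMap.range (T : H →ₗ[ℂ] H) =
      (Fᗮ.map (T : H →ₗ[ℂ] H)) ⊔ (F.map (T : H →ₗ[ℂ] H)) := by
    rw [← Submodule.map_top, ← htop, Submodule.map_sup, sup_comm]
  have hclr : IsClosed ((LinearMap.range (T : H →ₗ[ℂ] H)) : Set H) := by
    rw [hr]
    exact aux_isClosed_sup _ _ hcl1
  have hset : (LinearMap.range (T : H →ₗ[ℂ] H) : Set H) = Set.range (T : H → H) := by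
    ext z; simp [LinearMap.mem_range]
  rw [hset] at hclr
  have : Set.range (T : H → H) = Set.univ := by
    rw [← hclr.closure_eq]
    exact hdr.closure_range
  exact hns (Set.range_eq_univ.mp this)

end Aux

section Aux2

variable {H : Type*} [NormedAddCommGroup H] [InnerProductSpace ℂ H] [CompleteSpace H]

set_option maxHeartbeats 1000000 in
lemma aux_step (T : H →L[ℂ] H) (hinj : Function.Injective T) (hdr : DenseRange (T : H → H))
    (hns : ¬ Function.Surjective (T : H → H)) (F : Submodule ℂ H) [FiniteDimensional ℂ F]
    {ε δ : ℝ} (hε : 0 < ε) (hδ0 : 0 < δ) (hδ1 : δ < 1) :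
    ∃ x : H, ‖x‖ = 1 ∧ x ∈ Fᗮ ∧ 0 < ‖T x‖ ∧ ‖T x‖ < ε ∧
      ‖(inner ℂ x (T x) : ℂ)‖ < δ * ‖T x‖ := by
  set s : ℝ := δ / 2 with hs
  have hs0 : 0 < s := by positivity
  have hs1 : s < 1 / 2 := by simp only [hs]; linarith
  obtain ⟨a, ha1, haF, haε⟩ := aux_exists_small T hdr hns F (half_pos hε)
  set A : ℝ := ‖T a‖ with hA
  have ha0 : a ≠ 0 := by intro h; rw [h] at ha1; simp at ha1
  have hTa0 : T a ≠ 0 := fun h => ha0 (hinj (by simpa using h))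
  have hA0 : 0 < A := norm_pos_iff.2 hTa0
  set adj : H →L[ℂ] H := ContinuousLinearMap.adjoint T with hadj
  set F' : Submodule ℂ H := F ⊔ Submodule.span ℂ ({a, T a, adj a} : Set H) with hF'
  haveI : FiniteDimensional ℂ (Submodule.span ℂ ({a, T a, adj a} : Set H)) :=
    FiniteDimensional.span_of_finite ℂ
      (((Set.finite_singleton _).insert _).insert _)
  haveI : FiniteDimensional ℂ F' := by rw [hF']; infer_instance
  set η : ℝ := min (ε / 2) (s * A * δ / (2 * (1 + δ))) with hη
  have hη0 : 0 < η := by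
    apply lt_min (half_pos hε)
    positivity
  obtain ⟨b, hb1, hbF', hbη⟩ := aux_exists_small T hdr hns F' hη0
  set B : ℝ := ‖T b‖ with hB
  have hBnn : 0 ≤ B := norm_nonneg _
  have horth : ∀ v ∈ ({a, T a, adj a} : Set H), (inner ℂ v b : ℂ) = 0 := by
    intro v hv
    exact (Submodule.mem_orthogonal _ _).1 hbF' v
      (le_sup_right (α := Submodule ℂ H) (Submodule.subset_span hv))
  have hab : (inner ℂ a b : ℂ) = 0 := horth a (by simp)
  have hTab : (inner ℂ (T a) b : ℂ) = 0 := horth (T a) (by simp)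
  have hadjab : (inner ℂ (adj a) b : ℂ) = 0 := horth (adj a) (by simp)
  have haTb : (inner ℂ a (T b) : ℂ) = 0 := by
    rw [← ContinuousLinearMap.adjoint_inner_left T b a]
    exact hadjab
  have hbTa : (inner ℂ b (T a) : ℂ) = 0 := inner_eq_zero_symm.1 hTab
  have hba : (inner ℂ b a : ℂ) = 0 := inner_eq_zero_symm.1 hab
  set c : ℝ := Real.sqrt (1 - s ^ 2) with hc
  have hs2le : s ^ 2 ≤ 1 := by nlinarith
  have hc0 : 0 ≤ c := Real.sqrt_nonneg _
  have hc2 : c ^ 2 = 1 - s ^ 2 := Real.sq_sqrt (by nlinarith)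
  have hc1 : c ≤ 1 := by
    nlinarith
  set x : H := (s : ℂ) • a + (c : ℂ) • b with hx
  have hTx : T x = (s : ℂ) • T a + (c : ℂ) • T b := by
    rw [hx, map_add, map_smul, map_smul]
  have hnsa : ‖(s : ℂ) • a‖ = s := by
    rw [norm_smul, ha1, mul_one, Complex.norm_real, Real.norm_eq_abs, abs_of_pos hs0]
  have hnsb : ‖(c : ℂ) • b‖ = c := by
    rw [norm_smul, hb1, mul_one, Complex.norm_real, Real.norm_eq_abs, abs_of_nonneg hc0]
  have hxn : ‖x‖ = 1 := by
    have hinner : (inner ℂ ((s : ℂ) • a) ((c : ℂ) • b) : ℂ) = 0 := by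
      rw [inner_smul_left, inner_smul_right, hab]; ring
    have hmm := norm_add_sq_eq_norm_sq_add_norm_sq_of_inner_eq_zero _ _ hinner
    rw [hnsa, hnsb] at hmm
    have hx2 : ‖x‖ * ‖x‖ = 1 := by rw [hx, hmm]; nlinarith [hc2]
    nlinarith [norm_nonneg x]
  have hxF : x ∈ Fᗮ := by
    have hbF : b ∈ Fᗮ := Submodule.orthogonal_le (le_sup_left (α := Submodule ℂ H)) hbF'
    exact Submodule.add_mem _ (Submodule.smul_mem _ _ haF) (Submodule.smul_mem _ _ hbF)
  -- norm bounds on T x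
  have hTx_le : ‖T x‖ ≤ s * A + B := by
    rw [hTx]
    refine le_trans (norm_add_le _ _) ?_
    rw [norm_smul, norm_smul, Complex.norm_real, Real.norm_eq_abs, abs_of_pos hs0,
      Complex.norm_real, Real.norm_eq_abs, abs_of_nonneg hc0]
    have h2 : c * ‖T b‖ ≤ 1 * ‖T b‖ := mul_le_mul_of_nonneg_right hc1 (norm_nonneg _)
    nlinarith [h2, hA, hB]
  have hTx_ge : s * A - B ≤ ‖T x‖ := by
    have h1 : ‖(s : ℂ) • T a‖ ≤ ‖T x‖ + ‖(c : ℂ) • T b‖ := by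
      have : (s : ℂ) • T a = T x - (c : ℂ) • T b := by rw [hTx]; abel
      rw [this]
      exact norm_sub_le _ _
    rw [norm_smul, norm_smul, Complex.norm_real, Real.norm_eq_abs, abs_of_pos hs0,
      Complex.norm_real, Real.norm_eq_abs, abs_of_nonneg hc0] at h1
    have h2 : c * ‖T b‖ ≤ 1 * ‖T b‖ := mul_le_mul_of_nonneg_right hc1 (norm_nonneg _)
    nlinarith [h1, h2, hA, hB]
  have hBlt : B * (2 * (1 + δ)) < s * A * δ := by
    have : B < s * A * δ / (2 * (1 + δ)) := lt_of_lt_of_le hbη (min_le_right _ _)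
    rw [lt_div_iff₀ (by positivity)] at this
    linarith
  have hkey : s ^ 2 * A + B < δ * (s * A - B) := by
    have hs2 : s ^ 2 * A = s * A * δ / 2 := by rw [hs]; ring
    nlinarith [hBlt, hs2]
  have hpos : 0 < s * A - B := by nlinarith [sq_nonneg s, mul_pos hs0 hA0]
  have hTxpos : 0 < ‖T x‖ := lt_of_lt_of_le hpos hTx_ge
  have hTxε : ‖T x‖ < ε := by
    have hBe : B < ε / 2 := lt_of_lt_of_le hbη (min_le_left _ _)
    have : s * A < ε / 2 := by nlinarith
    linarith [hTx_le]
  -- inner ℂ product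
  have hexp : (inner ℂ x (T x) : ℂ) =
      ((s : ℂ)) ^ 2 * inner ℂ a (T a) + ((c : ℂ)) ^ 2 * inner ℂ b (T b) := by
    rw [hTx, hx]
    simp only [inner_add_left, inner_add_right, inner_smul_left, inner_smul_right,
      Complex.conj_ofReal, haTb, hbTa]
    ring
  have habs : ‖(inner ℂ x (T x) : ℂ)‖ ≤ s ^ 2 * A + B := by
    rw [hexp]
    refine le_trans (norm_add_le _ _) ?_
    rw [norm_mul, norm_mul, norm_pow, norm_pow, Complex.norm_real, Complex.norm_real,
      Real.norm_eq_abs, Real.norm_eq_abs, abs_of_pos hs0, abs_of_nonneg hc0]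
    have h1 : ‖(inner ℂ a (T a) : ℂ)‖ ≤ A := by
      have := norm_inner_le_norm (𝕜 := ℂ) a (T a)
      rwa [ha1, one_mul] at *
    have h2 : ‖(inner ℂ b (T b) : ℂ)‖ ≤ B := by
      have := norm_inner_le_norm (𝕜 := ℂ) b (T b)
      rwa [hb1, one_mul] at *
    have hc2' : c ^ 2 ≤ 1 := by nlinarith
    nlinarith [norm_nonneg (inner ℂ a (T a) : ℂ), norm_nonneg (inner ℂ b (T b) : ℂ),
      sq_nonneg s, sq_nonneg c]
  refine ⟨x, hxn, hxF, hTxpos, hTxε, ?_⟩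
  calc ‖(inner ℂ x (T x) : ℂ)‖ ≤ s ^ 2 * A + B := habs
    _ < δ * (s * A - B) := hkey
    _ ≤ δ * ‖T x‖ := mul_le_mul_of_nonneg_left hTx_ge hδ0.le

end Aux2

/-- Step 4 of the construction: a sequence `(hₙ)` of unit vectors with mutually
orthogonal blocks `span{hₙ, T hₙ}`, `‖T hₙ‖ → 0`, and such that no `hₙ` is a
`δ`-quasi-eigenvector of `T`, i.e. `|⟨hₙ, T hₙ⟩| < δ ‖T hₙ‖` for every `n`. -/
theorem stmt_8 {H : Type*} [NormedAddCommGroup H] [InnerProductSpace ℂ H] [CompleteSpace H]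
    (hinf : ¬ FiniteDimensional ℂ H)
    (T : H →L[ℂ] H) (hinj : Function.Injective T) (hdr : DenseRange (T : H → H))
    (hns : ¬ Function.Surjective (T : H → H))
    (δ : ℝ) (hδ0 : 0 < δ) (hδ1 : δ < 1) :
    ∃ h : ℕ → H,
      (∀ n : ℕ, ‖h n‖ = 1) ∧
      (∀ j k : ℕ, j ≠ k →
        (inner ℂ (h j) (h k) : ℂ) = 0 ∧ (inner ℂ (h j) (T (h k)) : ℂ) = 0 ∧
        (inner ℂ (T (h j)) (h k) : ℂ) = 0 ∧ (inner ℂ (T (h j)) (T (h k)) : ℂ) = 0) ∧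
      Tendsto (fun n : ℕ => ‖T (h n)‖) atTop (𝓝 0) ∧
      (∀ n : ℕ, ‖(inner ℂ (h n) (T (h n)) : ℂ)‖ < δ * ‖T (h n)‖) := by
  classical
  set adj : H →L[ℂ] H := ContinuousLinearMap.adjoint T with hadjdef
  have key : ∀ (p : {F : Submodule ℂ H // FiniteDimensional ℂ ↥F}) (n : ℕ),
      ∃ x : H, ‖x‖ = 1 ∧ x ∈ (p.1)ᗮ ∧ 0 < ‖T x‖ ∧ ‖T x‖ < 1 / ((n : ℝ) + 1) ∧
        ‖(inner ℂ x (T x) : ℂ)‖ < δ * ‖T x‖ := by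
    intro p n
    haveI := p.2
    exact aux_step T hinj hdr hns p.1 (by positivity) hδ0 hδ1
  choose pick h1 h2 h3 h4 h5 using key
  have hfd : ∀ (p : {F : Submodule ℂ H // FiniteDimensional ℂ ↥F}) (n : ℕ),
      FiniteDimensional ℂ ↥(p.1 ⊔ Submodule.span ℂ
        ({pick p n, T (pick p n), adj (pick p n), adj (T (pick p n))} : Set H)) := by
    intro p n
    haveI := p.2
    haveI : FiniteDimensional ℂ ↥(Submodule.span ℂ
        ({pick p n, T (pick p n), adj (pick p n), adj (T (pick p n))} : Set H)) :=
      FiniteDimensional.span_of_finite ℂ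
        ((((Set.finite_singleton _).insert _).insert _).insert _)
    infer_instance
  let Fs : ℕ → {F : Submodule ℂ H // FiniteDimensional ℂ ↥F} := fun n =>
    Nat.rec (motive := fun _ => {F : Submodule ℂ H // FiniteDimensional ℂ ↥F})
      ⟨⊥, inferInstance⟩
      (fun n p => ⟨p.1 ⊔ Submodule.span ℂ
        ({pick p n, T (pick p n), adj (pick p n), adj (T (pick p n))} : Set H), hfd p n⟩) n
  set h : ℕ → H := fun n => pick (Fs n) n with hh
  have hstep : ∀ n, (Fs (n+1)).1 = (Fs n).1 ⊔ Submodule.span ℂ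
      ({h n, T (h n), adj (h n), adj (T (h n))} : Set H) := fun n => rfl
  have hmono : Monotone (fun n => (Fs n).1) := monotone_nat_of_le_succ (fun n => by
    rw [hstep n]; exact le_sup_left)
  have hmem : ∀ j, ∀ v ∈ ({h j, T (h j), adj (h j), adj (T (h j))} : Set H),
      v ∈ (Fs (j+1)).1 := by
    intro j v hv
    rw [hstep j]
    exact le_sup_right (α := Submodule ℂ H) (Submodule.subset_span hv)
  have horth : ∀ j k, j < k → ∀ v ∈ ({h j, T (h j), adj (h j), adj (T (h j))} : Set H),
      (inner ℂ v (h k) : ℂ) = 0 := by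
    intro j k hjk v hv
    exact (Submodule.mem_orthogonal _ _).1 (h2 (Fs k) k) v (hmono hjk (hmem j v hv))
  have main : ∀ j k, j < k →
      (inner ℂ (h j) (h k) : ℂ) = 0 ∧ (inner ℂ (h j) (T (h k)) : ℂ) = 0 ∧
      (inner ℂ (T (h j)) (h k) : ℂ) = 0 ∧ (inner ℂ (T (h j)) (T (h k)) : ℂ) = 0 := by
    intro j k hjk
    refine ⟨horth j k hjk _ (by simp), ?_, horth j k hjk _ (by simp), ?_⟩
    · rw [← ContinuousLinearMap.adjoint_inner_left T (h k) (h j)]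
      exact horth j k hjk _ (by simp [hadjdef])
    · rw [← ContinuousLinearMap.adjoint_inner_left T (h k) (T (h j))]
      exact horth j k hjk _ (by simp [hadjdef])
  refine ⟨h, fun n => h1 (Fs n) n, ?_, ?_, fun n => h5 (Fs n) n⟩
  · intro j k hjk
    rcases lt_or_gt_of_ne hjk with hlt | hgt
    · exact main j k hlt
    · obtain ⟨c1, c2, c3, c4⟩ := main k j hgt
      exact ⟨inner_eq_zero_symm.1 c1, inner_eq_zero_symm.1 c3, inner_eq_zero_symm.1 c2,
        inner_eq_zero_symm.1 c4⟩
  · apply squeeze_zero (fun n => norm_nonneg _) (fun n => (h4 (Fs n) n).le)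
    exact tendsto_one_div_add_atTop_nhds_zero_nat
end

section
/- Let A be the generator of a C₀-semigroup e^{tA} on a complex Hilbert space H, let g ∈ D(A) with ‖g‖ = 1, and let P_g denote the orthogonal projection of H onto the one-dimensional subspace spanned by g. Then lim_{n→∞} (e^{(1/n)A} P_g)^n g = e^{⟨A g, g⟩} g in the norm of H. -/
open Filter Topology

open Asymptotics in
lemma tendsto_pow_exp_of_mul_sub_one {f : ℕ → ℂ} {c : ℂ}
    (h : Tendsto (fun n : ℕ => (n : ℂ) * (f n - 1)) atTop (𝓝 c)) :
    Tendsto (fun n : ℕ => f n ^ n) atTop (𝓝 (Complex.exp c)) := by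
  have hinv : Tendsto (fun n : ℕ => ((n : ℂ))⁻¹) atTop (𝓝 0) := by
    have h1 : Tendsto (fun n : ℕ => (((n : ℝ)⁻¹ : ℝ) : ℂ)) atTop (𝓝 ((0 : ℝ) : ℂ)) :=
      (Complex.continuous_ofReal.tendsto _).comp tendsto_inv_atTop_nhds_zero_nat
    simpa using h1
  have hf1 : Tendsto f atTop (𝓝 1) := by
    have h2 : Tendsto (fun n : ℕ => ((n : ℂ))⁻¹ * ((n : ℂ) * (f n - 1))) atTop (𝓝 (0 * c)) :=
      hinv.mul h
    rw [zero_mul] at h2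
    have h3 : Tendsto (fun n : ℕ => f n - 1) atTop (𝓝 0) := by
      apply h2.congr'
      filter_upwards [eventually_ge_atTop 1] with n hn
      have hne : (n : ℂ) ≠ 0 := Nat.cast_ne_zero.mpr (by omega)
      field_simp
    have := h3.add_const 1
    simpa using this
  have hlog : HasDerivAt Complex.log 1 1 := by
    simpa using Complex.hasDerivAt_log Complex.one_mem_slitPlane
  have ho : (fun z => Complex.log z - (z - 1)) =o[𝓝 1] (fun z => z - 1) := by
    have := hasDerivAt_iff_isLittleO.mp hlog
    simpa [Complex.log_one] using this
  have ho2 : (fun n : ℕ => Complex.log (f n) - (f n - 1)) =o[atTop] (fun n => f n - 1) :=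
    ho.comp_tendsto hf1
  have h4 : (fun n : ℕ => (n : ℂ) * (Complex.log (f n) - (f n - 1))) =o[atTop]
      (fun n : ℕ => (n : ℂ) * (f n - 1)) :=
    (isBigO_refl (fun n : ℕ => (n : ℂ)) atTop).mul_isLittleO ho2
  have h5 : Tendsto (fun n : ℕ => (n : ℂ) * (Complex.log (f n) - (f n - 1))) atTop (𝓝 0) :=
    isLittleO_one_iff ℂ |>.mp (h4.trans_isBigO (h.isBigO_one ℂ))
  have hsum : Tendsto (fun n : ℕ => (n : ℂ) * Complex.log (f n)) atTop (𝓝 c) := by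
    have := h.add h5
    rw [add_zero] at this
    apply this.congr
    intro n; ring
  have h6 : Tendsto (fun n : ℕ => Complex.exp ((n : ℂ) * Complex.log (f n))) atTop
      (𝓝 (Complex.exp c)) := hsum.cexp
  apply h6.congr'
  filter_upwards [hf1.eventually_ne one_ne_zero] with n hn
  rw [Complex.exp_nat_mul, Complex.exp_log hn]

/-- A `C₀`-semigroup on `H`: a strongly continuous one-parameter semigroup of bounded
linear operators, `T 0 = I`, `T (s+t) = T s ∘ T t` for `s, t ≥ 0`. -/
structure C0Semigroup (H : Type*) [NormedAddCommGroup H] [NormedSpace ℂ H] where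
  toFun : ℝ → H →L[ℂ] H
  map_zero' : toFun 0 = 1
  map_add' : ∀ s t : ℝ, 0 ≤ s → 0 ≤ t → toFun (s + t) = (toFun s).comp (toFun t)
  strong_continuity : ∀ x : H, ContinuousOn (fun t : ℝ => toFun t x) (Set.Ici 0)

/-- `(D, A)` is the (infinitesimal) generator of the semigroup `S`:
`D = {x : lim_{t→0+} (T t x - x)/t exists}` and `A x` is that limit for `x ∈ D`. -/
def IsGenerator {H : Type*} [NormedAddCommGroup H] [NormedSpace ℂ H]
    (S : C0Semigroup H) (D : Set H) (A : H → H) : Prop :=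
  (∀ x : H, x ∈ D ↔ ∃ y : H,
    Tendsto (fun t : ℝ => (t : ℂ)⁻¹ • (S.toFun t x - x)) (nhdsWithin 0 (Set.Ioi 0)) (nhds y)) ∧
  (∀ x ∈ D,
    Tendsto (fun t : ℝ => (t : ℂ)⁻¹ • (S.toFun t x - x)) (nhdsWithin 0 (Set.Ioi 0)) (nhds (A x)))

/-- The operator `A` with domain `D` is bounded: `D = H` and `A` agrees with a bounded
(continuous) linear operator on `H`. -/
def IsBoundedOperator {H : Type*} [NormedAddCommGroup H] [NormedSpace ℂ H]
    (D : Set H) (A : H → H) : Prop :=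
  D = Set.univ ∧ ∃ A' : H →L[ℂ] H, ∀ x : H, A' x = A x

/-- The orthogonal projection onto the span of a unit vector `g`:
`P_g x = ⟨x, g⟩ g` (inner product linear in the first slot in the paper's convention,
i.e. `P_g x = ⟪g, x⟫ • g` in Mathlib's convention). -/
noncomputable def projOn {H : Type*} [NormedAddCommGroup H] [InnerProductSpace ℂ H]
    (g : H) : H →L[ℂ] H :=
  (innerSL ℂ g).smulRight g

/-- For a unit vector `g ∈ D(A)`, the Trotter-type products converge:
`(e^{(1/n)A} P_g)ⁿ g → e^{⟨Ag, g⟩} g` in `H`. -/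
theorem stmt_10 {H : Type*} [NormedAddCommGroup H] [InnerProductSpace ℂ H] [CompleteSpace H]
    (S : C0Semigroup H) (D : Set H) (A : H → H) (hgen : IsGenerator S D A)
    (g : H) (hgD : g ∈ D) (hg : ‖g‖ = 1) :
    Tendsto (fun n : ℕ => (((S.toFun (1 / (n : ℝ))).comp (projOn g)) ^ n) g) atTop
      (𝓝 (Complex.exp (inner ℂ g (A g) : ℂ) • g)) := by
  have hAg := hgen.2 g hgD
  have hgg : (inner ℂ g g : ℂ) = 1 := by
    rw [inner_self_eq_norm_sq_to_K, hg]; norm_num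
  set c : ℂ := inner ℂ g (A g) with hc
  set φ : ℕ → ℂ := fun n => inner ℂ g (S.toFun (1 / (n : ℝ)) g) with hφ
  -- power formula
  have hpow : ∀ (t : ℝ) (n : ℕ),
      (((S.toFun t).comp (projOn g)) ^ (n + 1)) g
        = (inner ℂ g (S.toFun t g) : ℂ) ^ n • (S.toFun t g) := by
    intro t n
    induction n with
    | zero => simp [projOn, hgg, hg]
    | succ n ih =>
      rw [pow_succ', ContinuousLinearMap.mul_apply, ih]
      simp only [ContinuousLinearMap.comp_apply, projOn, ContinuousLinearMap.smulRight_apply,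
        innerSL_apply_apply, inner_smul_right, map_smul, smul_smul]
      rw [← pow_succ]
  -- sequence 1/n tends to 0 within Ioi
  have hseq : Tendsto (fun n : ℕ => 1 / (n : ℝ)) atTop (𝓝[>] (0 : ℝ)) := by
    rw [tendsto_nhdsWithin_iff]
    constructor
    · exact tendsto_one_div_atTop_nhds_zero_nat
    · filter_upwards [eventually_ge_atTop 1] with n hn
      have : (0 : ℝ) < (n : ℝ) := by positivity
      simp [Set.mem_Ioi]
      positivity
  -- vector limit
  have hvec : Tendsto (fun n : ℕ => S.toFun (1 / (n : ℝ)) g) atTop (𝓝 g) := by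
    have hcw : Tendsto (fun t : ℝ => S.toFun t g) (𝓝[Set.Ici 0] 0) (𝓝 (S.toFun 0 g)) :=
      (S.strong_continuity g).continuousWithinAt Set.self_mem_Ici
    rw [S.map_zero', ContinuousLinearMap.one_apply] at hcw
    exact hcw.comp (hseq.mono_right (nhdsWithin_mono _ Set.Ioi_subset_Ici_self))
  -- scalar limits
  have hφ1 : Tendsto φ atTop (𝓝 1) := by
    have := ((innerSL ℂ g).continuous.tendsto g).comp hvec
    simp only [Function.comp, innerSL_apply_apply] at this
    rw [hgg] at this
    exact this
  have hφlim : Tendsto (fun n : ℕ => (n : ℂ) * (φ n - 1)) atTop (𝓝 c) := by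
    have hcont : Tendsto (fun t : ℝ => (innerSL ℂ g) ((t : ℂ)⁻¹ • (S.toFun t g - g)))
        (𝓝[>] (0 : ℝ)) (𝓝 ((innerSL ℂ g) (A g))) :=
      ((innerSL ℂ g).continuous.tendsto _).comp hAg
    have := hcont.comp hseq
    apply this.congr
    intro n
    simp only [Function.comp, innerSL_apply_apply, inner_smul_right, inner_sub_right, hgg]
    push_cast
    rw [one_div, inv_inv]
  have hφpow : Tendsto (fun n : ℕ => φ n ^ n) atTop (𝓝 (Complex.exp c)) :=
    tendsto_pow_exp_of_mul_sub_one hφlim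
  have hφpow' : Tendsto (fun n : ℕ => φ n ^ (n - 1)) atTop (𝓝 (Complex.exp c)) := by
    have hdiv : Tendsto (fun n : ℕ => φ n ^ n / φ n) atTop (𝓝 (Complex.exp c / 1)) :=
      hφpow.div hφ1 one_ne_zero
    rw [div_one] at hdiv
    apply hdiv.congr'
    filter_upwards [eventually_ge_atTop 1, hφ1.eventually_ne one_ne_zero] with n hn hne
    rw [eq_comm, pow_sub₀ _ hne hn, pow_one, div_eq_mul_inv]
  have hmain : Tendsto (fun n : ℕ => φ n ^ (n - 1) • S.toFun (1 / (n : ℝ)) g) atTop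
      (𝓝 (Complex.exp c • g)) := hφpow'.smul hvec
  apply hmain.congr'
  filter_upwards [eventually_ge_atTop 1] with n hn
  obtain ⟨m, rfl⟩ : ∃ m, n = m + 1 := ⟨n - 1, by omega⟩
  rw [hpow]
  simp [hφ]
end

section
/- Let A be the generator of a C₀-semigroup e^{tA} on a complex Hilbert space H, and suppose A is bounded (D(A) = H and A continuous). Then for every bounded projection P on H, every x ∈ H and every t > 0, the sequence (e^{(t/n)A} P)^n x converges in H as n → ∞. -/
open Filter Topology

open NormedSpace

noncomputable instance {E : Type*} [NormedRing E] [NormedAlgebra ℝ E] : NormedAlgebra ℚ E :=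
  .restrictScalars ℚ ℝ E

section AlgAux
variable {R : Type*} [Ring R]

private lemma aux_one_add_pow_mul_proj {p d : R} (hdp : d * p = d) :
    ∀ k : ℕ, (1 + d) ^ k * p = p - 1 + (1 + d) ^ k := by
  intro k
  induction k with
  | zero => simp
  | succ k ih =>
    have : (1 + d) ^ (k+1) * p = (1 + d) ^ k * p + (1 + d) ^ k * (d * p) := by
      rw [pow_succ]; noncomm_ring
    rw [this, hdp, ih, pow_succ]; noncomm_ring

private lemma aux_proj_add_pow {p d : R} (hp : p * p = p) (hpd : p * d = d) (hdp : d * p = d) :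
    ∀ k : ℕ, (p + d) ^ (k + 1) = p - 1 + (1 + d) ^ (k + 1) := by
  intro k
  induction k with
  | zero => simp; noncomm_ring
  | succ k ih =>
    have e1 : (p + d) ^ (k + 2) = (p + d) ^ (k+1) * (p + d) := pow_succ _ _
    rw [e1, ih]
    have e2 : (p - 1 + (1 + d) ^ (k+1)) * (p + d)
        = (p * p + p * d - p - d) + ((1 + d) ^ (k+1) * p + (1 + d) ^ (k+1) * d) := by
      noncomm_ring
    rw [e2, hp, hpd, aux_one_add_pow_mul_proj hdp, pow_succ]
    noncomm_ring

private lemma aux_pow_sub_pow_eq {x y : R} (n : ℕ) :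
    x ^ n - y ^ n = ∑ j ∈ Finset.range n, x ^ j * (x - y) * y ^ (n - 1 - j) := by
  induction n with
  | zero => simp
  | succ n ih =>
    rw [Finset.sum_range_succ]
    have : ∀ j ∈ Finset.range n, x ^ j * (x - y) * y ^ (n + 1 - 1 - j)
        = (x ^ j * (x - y) * y ^ (n - 1 - j)) * y := by
      intro j hj
      have hj' : j < n := Finset.mem_range.1 hj
      have : n + 1 - 1 - j = (n - 1 - j) + 1 := by omega
      rw [this, pow_succ]; noncomm_ring
    rw [Finset.sum_congr rfl this, ← Finset.sum_mul, ← ih]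
    simp only [Nat.add_sub_cancel, Nat.sub_self, pow_zero, mul_one]
    rw [pow_succ, pow_succ]
    noncomm_ring

private lemma aux_up_pow_aux1 {p : R} (u : R) :
    ∀ k : ℕ, (u * p) ^ (k + 1) = u * (p * u) ^ k * p := by
  intro k
  induction k with
  | zero => simp
  | succ k ih =>
    have : (u * p) ^ (k + 2) = (u * p) * (u * p) ^ (k+1) := by
      rw [pow_succ']
    rw [this, ih, pow_succ']
    noncomm_ring

private lemma aux_up_pow_aux2 {p : R} (hp : p * p = p) (u : R) :
    ∀ k : ℕ, (p * u) ^ (k + 1) = (p * u * p) ^ k * (p * u) := by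
  intro k
  induction k with
  | zero => simp
  | succ k ih =>
    have e1 : (p * u) ^ (k + 2) = (p * u) ^ (k+1) * (p * u) := pow_succ _ _
    rw [e1, ih]
    have e2 : (p * u * p) ^ k * (p * u) * (p * u) = (p * u * p) ^ k * ((p * u * p) * u) := by
      noncomm_ring
    rw [e2]
    have e3 : (p * u * p) ^ (k+1) * (p * u) = (p * u * p) ^ k * ((p * u * p) * (p * u)) := by
      rw [pow_succ]; noncomm_ring
    rw [e3]
    congr 1
    have : p * u * p * (p * u) = p * u * (p * p) * u := by noncomm_ring
    rw [this, hp]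

private lemma aux_up_pow {p : R} (hp : p * p = p) (u : R) (m : ℕ) :
    (u * p) ^ (m + 2) = u * (p * u * p) ^ (m + 1) := by
  rw [aux_up_pow_aux1 u (m+1), aux_up_pow_aux2 hp u m, pow_succ]
  noncomm_ring

end AlgAux

section NormAux
variable {E : Type*} [NormedRing E]

private lemma aux_norm_pow_sub_pow_le {x y : E} {K₁ K₂ δ : ℝ} (n : ℕ)
    (h₁ : ∀ j ≤ n, ‖x ^ j‖ ≤ K₁) (h₂ : ∀ j ≤ n, ‖y ^ j‖ ≤ K₂)
    (hδ : ‖x - y‖ ≤ δ) :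
    ‖x ^ n - y ^ n‖ ≤ n * (K₁ * K₂ * δ) := by
  have hK₁ : 0 ≤ K₁ := le_trans (norm_nonneg _) (h₁ 0 (Nat.zero_le _))
  have hK₂ : 0 ≤ K₂ := le_trans (norm_nonneg _) (h₂ 0 (Nat.zero_le _))
  have hδ0 : 0 ≤ δ := le_trans (norm_nonneg _) hδ
  rw [aux_pow_sub_pow_eq]
  calc ‖∑ j ∈ Finset.range n, x ^ j * (x - y) * y ^ (n - 1 - j)‖
      ≤ ∑ j ∈ Finset.range n, ‖x ^ j * (x - y) * y ^ (n - 1 - j)‖ := norm_sum_le _ _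
    _ ≤ ∑ _j ∈ Finset.range n, K₁ * K₂ * δ := by
        apply Finset.sum_le_sum
        intro j hj
        have hj' : j < n := Finset.mem_range.1 hj
        have b1 : ‖x ^ j * (x - y) * y ^ (n - 1 - j)‖ ≤ ‖x ^ j‖ * ‖x - y‖ * ‖y ^ (n-1-j)‖ :=
          le_trans (norm_mul_le _ _)
            (mul_le_mul_of_nonneg_right (norm_mul_le _ _) (norm_nonneg _))
        refine le_trans b1 ?_
        have h2 : ‖x ^ j‖ * ‖x - y‖ * ‖y ^ (n-1-j)‖ ≤ K₁ * δ * K₂ := by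
          apply mul_le_mul
          · exact mul_le_mul (h₁ j hj'.le) hδ (norm_nonneg _) hK₁
          · exact h₂ _ (by omega)
          · exact norm_nonneg _
          · positivity
        linarith [h2]
    _ = n * (K₁ * K₂ * δ) := by rw [Finset.sum_const, Finset.card_range, nsmul_eq_mul]

private lemma aux_proj_add_pow_norm_le (h1 : ‖(1:E)‖ ≤ 1) {p d : E}
    (hp : p * p = p) (hpd : p * d = d) (hdp : d * p = d) {c : ℝ} (hd : ‖d‖ ≤ c) :
    ∀ j : ℕ, ‖(p + d) ^ j‖ ≤ ‖p‖ + 1 + (1 + c) ^ j := by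
  have hc0 : 0 ≤ c := le_trans (norm_nonneg _) hd
  intro j
  match j with
  | 0 =>
    simp only [pow_zero]
    have : (0:ℝ) ≤ ‖p‖ := norm_nonneg _
    nlinarith [h1]
  | (k+1) =>
    rw [aux_proj_add_pow hp hpd hdp k]
    have hb : ‖(1 + d) ^ (k+1)‖ ≤ (1 + c) ^ (k+1) := by
      calc ‖(1 + d) ^ (k+1)‖ ≤ ‖1 + d‖ ^ (k+1) := norm_pow_le' _ (Nat.succ_pos k)
        _ ≤ (1 + c) ^ (k+1) := by
            apply pow_le_pow_left₀ (norm_nonneg _)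
            calc ‖(1:E) + d‖ ≤ ‖(1:E)‖ + ‖d‖ := norm_add_le _ _
              _ ≤ 1 + c := add_le_add h1 hd
    calc ‖p - 1 + (1 + d) ^ (k+1)‖ ≤ ‖p - 1‖ + ‖(1 + d) ^ (k+1)‖ := norm_add_le _ _
      _ ≤ (‖p‖ + ‖(1:E)‖) + (1 + c) ^ (k+1) := add_le_add (norm_sub_le _ _) hb
      _ ≤ ‖p‖ + 1 + (1 + c) ^ (k+1) := by linarith [h1]

end NormAux

section ExpAux
variable {E : Type*} [NormedRing E] [NormedAlgebra ℝ E] [CompleteSpace E]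

private lemma aux_norm_exp_sub_one_sub_le (c : E) :
    ‖exp c - 1 - c‖ ≤ ‖c‖ ^ 2 * Real.exp ‖c‖ := by
  have hs : HasSum (fun n : ℕ => ((Nat.factorial n : ℝ))⁻¹ • c ^ n) (exp c) :=
    exp_series_hasSum_exp' c
  have hs2 : HasSum (fun n : ℕ => ((Nat.factorial (n+2) : ℝ))⁻¹ • c ^ (n+2))
      (exp c - ∑ i ∈ Finset.range 2, ((Nat.factorial i : ℝ))⁻¹ • c ^ i) :=
    (hasSum_nat_add_iff (f := fun n : ℕ => ((Nat.factorial n : ℝ))⁻¹ • c ^ n) 2).2 (by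
      simpa using hs)
  have hsum : ∑ i ∈ Finset.range 2, ((Nat.factorial i : ℝ))⁻¹ • c ^ i = 1 + c := by
    simp [Finset.sum_range_succ]
  rw [hsum] at hs2
  have h1 : exp c - 1 - c = ∑' n : ℕ, ((Nat.factorial (n+2) : ℝ))⁻¹ • c ^ (n+2) := by
    rw [hs2.tsum_eq]; abel
  rw [h1]
  have hb : ∀ n : ℕ, ‖((Nat.factorial (n+2) : ℝ))⁻¹ • c ^ (n+2)‖
      ≤ ‖c‖^2 * (‖c‖ ^ n / Nat.factorial n) := by
    intro n
    rw [norm_smul]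
    have hnn : ‖((Nat.factorial (n+2) : ℝ))⁻¹‖ = ((Nat.factorial (n+2) : ℝ))⁻¹ := by
      rw [Real.norm_eq_abs, abs_of_nonneg]
      positivity
    rw [hnn]
    have hfact : (Nat.factorial n : ℝ) ≤ (Nat.factorial (n+2) : ℝ) := by
      exact_mod_cast Nat.factorial_le (by omega)
    calc ((Nat.factorial (n+2) : ℝ))⁻¹ * ‖c ^ (n+2)‖
        ≤ ((Nat.factorial n : ℝ))⁻¹ * ‖c‖ ^ (n+2) := by
          apply mul_le_mul
          · exact inv_anti₀ (by positivity) hfact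
          · exact norm_pow_le' _ (by omega)
          · exact norm_nonneg _
          · positivity
      _ = ‖c‖^2 * (‖c‖ ^ n / Nat.factorial n) := by rw [pow_add]; field_simp
  have hsummable : Summable fun n : ℕ => ‖c‖^2 * (‖c‖ ^ n / Nat.factorial n) :=
    (Real.summable_pow_div_factorial ‖c‖).mul_left _
  have hnorm_summable : Summable fun n : ℕ => ‖((Nat.factorial (n+2) : ℝ))⁻¹ • c ^ (n+2)‖ :=
    Summable.of_nonneg_of_le (fun n => norm_nonneg _) hb hsummable
  calc ‖∑' n : ℕ, ((Nat.factorial (n+2) : ℝ))⁻¹ • c ^ (n+2)‖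
      ≤ ∑' n : ℕ, ‖((Nat.factorial (n+2) : ℝ))⁻¹ • c ^ (n+2)‖ :=
        norm_tsum_le_tsum_norm hnorm_summable
    _ ≤ ∑' n : ℕ, ‖c‖^2 * (‖c‖ ^ n / Nat.factorial n) :=
        Summable.tsum_le_tsum hb hnorm_summable hsummable
    _ = ‖c‖^2 * ∑' n : ℕ, (‖c‖ ^ n / Nat.factorial n) := tsum_mul_left
    _ = ‖c‖^2 * Real.exp ‖c‖ := by
        congr 1
        rw [Real.exp_eq_exp_ℝ, exp_eq_tsum_div]

private lemma aux_proj_mul_exp_sub_one {p c : E} (hpc : p * c = c) :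
    p * (exp c - 1) = exp c - 1 := by
  have hs : HasSum (fun n : ℕ => ((Nat.factorial n : ℝ))⁻¹ • c ^ n) (exp c) :=
    exp_series_hasSum_exp' c
  have hs1 : HasSum (fun n : ℕ => ((Nat.factorial (n+1) : ℝ))⁻¹ • c ^ (n+1))
      (exp c - 1) :=
    (hasSum_nat_add_iff (f := fun n : ℕ => ((Nat.factorial n : ℝ))⁻¹ • c ^ n) 1).2 (by
      simpa using hs)
  have hterm : ∀ n : ℕ, p * (((Nat.factorial (n+1) : ℝ))⁻¹ • c ^ (n+1))
      = ((Nat.factorial (n+1) : ℝ))⁻¹ • c ^ (n+1) := by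
    intro n
    rw [mul_smul_comm]
    congr 1
    rw [pow_succ', ← mul_assoc, hpc]
  have hs2 := hs1.mul_left p
  simp only [hterm] at hs2
  exact hs2.unique hs1

private lemma aux_exp_sub_one_mul_proj {p c : E} (hcp : c * p = c) :
    (exp c - 1) * p = exp c - 1 := by
  have hs : HasSum (fun n : ℕ => ((Nat.factorial n : ℝ))⁻¹ • c ^ n) (exp c) :=
    exp_series_hasSum_exp' c
  have hs1 : HasSum (fun n : ℕ => ((Nat.factorial (n+1) : ℝ))⁻¹ • c ^ (n+1))
      (exp c - 1) :=
    (hasSum_nat_add_iff (f := fun n : ℕ => ((Nat.factorial n : ℝ))⁻¹ • c ^ n) 1).2 (by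
      simpa using hs)
  have hterm : ∀ n : ℕ, (((Nat.factorial (n+1) : ℝ))⁻¹ • c ^ (n+1)) * p
      = ((Nat.factorial (n+1) : ℝ))⁻¹ • c ^ (n+1) := by
    intro n
    rw [smul_mul_assoc]
    congr 1
    rw [pow_succ, mul_assoc, hcp]
  have hs2 := hs1.mul_right p
  simp only [hterm] at hs2
  exact hs2.unique hs1

end ExpAux

section SemigroupExp

open NormedSpace

variable {H : Type*} [NormedAddCommGroup H] [NormedSpace ℂ H] [CompleteSpace H]

variable {H : Type*} [NormedAddCommGroup H] [NormedSpace ℂ H] [CompleteSpace H]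

lemma gen_real_tendsto (S : C0Semigroup H) (a : H →L[ℂ] H)
    (htend : ∀ x : H, Tendsto (fun t : ℝ => (t : ℂ)⁻¹ • (S.toFun t x - x))
      (nhdsWithin 0 (Set.Ioi 0)) (𝓝 (a x))) (x : H) :
    Tendsto (fun t : ℝ => t⁻¹ • (S.toFun t x - x)) (nhdsWithin 0 (Set.Ioi 0)) (𝓝 (a x)) := by
  have : (fun t : ℝ => t⁻¹ • (S.toFun t x - x))
      = fun t : ℝ => (t : ℂ)⁻¹ • (S.toFun t x - x) := by
    funext t
    rw [← Complex.coe_smul, Complex.ofReal_inv]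
  rw [this]; exact htend x

lemma gen_commute (S : C0Semigroup H) (a : H →L[ℂ] H)
    (htend : ∀ x : H, Tendsto (fun t : ℝ => (t : ℂ)⁻¹ • (S.toFun t x - x))
      (nhdsWithin 0 (Set.Ioi 0)) (𝓝 (a x))) (s : ℝ) (hs : 0 ≤ s) (x : H) :
    a (S.toFun s x) = S.toFun s (a x) := by
  have h1 : Tendsto (fun t : ℝ => t⁻¹ • (S.toFun t (S.toFun s x) - S.toFun s x))
      (nhdsWithin 0 (Set.Ioi 0)) (𝓝 (a (S.toFun s x))) := gen_real_tendsto S a htend _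
  have h2 : Tendsto (fun t : ℝ => t⁻¹ • (S.toFun t (S.toFun s x) - S.toFun s x))
      (nhdsWithin 0 (Set.Ioi 0)) (𝓝 (S.toFun s (a x))) := by
    have h3 : Tendsto (fun t : ℝ => S.toFun s (t⁻¹ • (S.toFun t x - x)))
        (nhdsWithin 0 (Set.Ioi 0)) (𝓝 (S.toFun s (a x))) :=
      ((S.toFun s).continuous.tendsto _).comp (gen_real_tendsto S a htend x)
    apply h3.congr'
    filter_upwards [self_mem_nhdsWithin] with t ht
    have ht' : (0:ℝ) ≤ t := le_of_lt ht
    have : S.toFun t (S.toFun s x) = S.toFun s (S.toFun t x) := by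
      rw [← ContinuousLinearMap.comp_apply, ← ContinuousLinearMap.comp_apply,
        ← S.map_add' t s ht' hs, ← S.map_add' s t hs ht', add_comm]
    rw [(S.toFun s).map_smul_of_tower, map_sub, this]
  exact tendsto_nhds_unique h1 h2

lemma semigroup_right_deriv (S : C0Semigroup H) (a : H →L[ℂ] H)
    (htend : ∀ x : H, Tendsto (fun t : ℝ => (t : ℂ)⁻¹ • (S.toFun t x - x))
      (nhdsWithin 0 (Set.Ioi 0)) (𝓝 (a x))) (x : H) (s : ℝ) (hs : 0 ≤ s) :
    HasDerivWithinAt (fun u : ℝ => S.toFun u x) (S.toFun s (a x)) (Set.Ici s) s := by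
  rw [hasDerivWithinAt_iff_tendsto_slope]
  have hset : Set.Ici s \ {s} = Set.Ioi s := Set.Ici_sdiff_left
  rw [hset]
  have hmap : Tendsto (fun u : ℝ => u - s) (nhdsWithin s (Set.Ioi s))
      (nhdsWithin 0 (Set.Ioi 0)) := by
    rw [tendsto_nhdsWithin_iff]
    constructor
    · have : Tendsto (fun u : ℝ => u - s) (𝓝 s) (𝓝 (s - s)) :=
        (continuous_id.sub continuous_const).tendsto s
      rw [sub_self] at this
      exact this.mono_left nhdsWithin_le_nhds
    · filter_upwards [self_mem_nhdsWithin] with u hu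
      exact sub_pos.2 (Set.mem_Ioi.1 hu)
  have key : Tendsto (fun u : ℝ => S.toFun s ((u - s)⁻¹ • (S.toFun (u - s) x - x)))
      (nhdsWithin s (Set.Ioi s)) (𝓝 (S.toFun s (a x))) :=
    (((S.toFun s).continuous.tendsto _).comp (gen_real_tendsto S a htend x)).comp hmap
  apply key.congr'
  filter_upwards [self_mem_nhdsWithin] with u hu
  have hu' : s < u := hu
  have h0 : (0:ℝ) ≤ u - s := by linarith
  rw [slope_def_module]
  have : S.toFun u x = S.toFun s (S.toFun (u - s) x) := by
    rw [← ContinuousLinearMap.comp_apply, ← S.map_add' s (u - s) hs h0]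
    congr 1
    ring_nf
  rw [(S.toFun s).map_smul_of_tower, map_sub, ← this]

lemma semigroup_eq_exp (S : C0Semigroup H) (a : H →L[ℂ] H)
    (htend : ∀ x : H, Tendsto (fun t : ℝ => (t : ℂ)⁻¹ • (S.toFun t x - x))
      (nhdsWithin 0 (Set.Ioi 0)) (𝓝 (a x))) (s : ℝ) (hs : 0 ≤ s) :
    S.toFun s = exp (s • a) := by
  set r := ContinuousLinearMap.restrictScalarsL ℂ H H ℝ ℝ with hr
  have hc : ∀ u : ℝ, HasDerivAt (fun v : ℝ => r (exp (v • (-a))))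
      (r (exp (u • (-a)) * (-a))) u := by
    intro u
    exact r.hasFDerivAt.comp_hasDerivAt u (hasDerivAt_exp_smul_const (-a) u)
  ext x
  -- the function g
  set g : ℝ → H := fun u => r (exp (u • (-a))) (S.toFun u x) with hg
  have hgcont : ContinuousOn g (Set.Icc 0 s) := by
    apply ContinuousOn.clm_apply
    · apply Continuous.continuousOn
      exact r.continuous.comp (exp_continuous.comp (continuous_id.smul continuous_const))
    · exact (S.strong_continuity x).mono (fun u hu => hu.1)
  have hderiv : ∀ u ∈ Set.Ico 0 s, HasDerivWithinAt g 0 (Set.Ici u) u := by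
    intro u hu
    have hu0 : (0:ℝ) ≤ u := hu.1
    have hd := ((hc u).hasDerivWithinAt (s := Set.Ici u)).clm_apply
      (semigroup_right_deriv S a htend x u hu0)
    have hzero : r (exp (u • (-a)) * (-a)) (S.toFun u x)
        + r (exp (u • (-a))) (S.toFun u (a x)) = 0 := by
      have rapp : ∀ (T : H →L[ℂ] H) (v : H), r T v = T v := fun T v => rfl
      rw [rapp, rapp, ContinuousLinearMap.mul_apply, ← gen_commute S a htend u hu0 x]
      simp [← map_add]
    rwa [hzero] at hd
  have hconst := constant_of_has_deriv_right_zero hgcont hderiv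
  have hgs : g s = g 0 := hconst s ⟨hs, le_refl s⟩
  have hg0 : g 0 = x := by
    show r (exp ((0:ℝ) • (-a))) (S.toFun 0 x) = x
    rw [zero_smul, exp_zero, S.map_zero']
    rfl
  rw [hg0] at hgs
  -- now g s = x means exp (s • (-a)) (S s x) = x
  have hkey : exp (s • (-a)) (S.toFun s x) = x := hgs
  have hcomm : Commute (s • a) (s • (-a)) :=
    (((Commute.refl a).neg_right).smul_left s).smul_right s
  have hinv : exp (s • a) * exp (s • (-a)) = 1 := by
    rw [← exp_add_of_commute hcomm, smul_neg, add_neg_cancel, exp_zero]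
  calc S.toFun s x = (exp (s • a) * exp (s • (-a))) (S.toFun s x) := by
        rw [hinv, ContinuousLinearMap.one_apply]
    _ = exp (s • a) (exp (s • (-a)) (S.toFun s x)) := by
        rw [ContinuousLinearMap.mul_apply]
    _ = exp (s • a) x := by rw [hkey]

end SemigroupExp

section MainOp

open NormedSpace

variable {E : Type*} [NormedRing E] [NormedAlgebra ℝ E] [CompleteSpace E]
set_option maxHeartbeats 1000000 in
private lemma aux_main_op_limit (h1 : ‖(1:E)‖ ≤ 1) (a p : E) (hp : p * p = p)
    (t : ℝ) (ht : 0 < t) :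
    Tendsto (fun n : ℕ => (exp ((t / n) • a) * p) ^ n) atTop
      (𝓝 (p - 1 + exp (t • (p * a * p)))) := by
  set b : E := p * a * p with hb
  have hpb : p * b = b := by rw [hb, ← mul_assoc, ← mul_assoc, hp]
  have hbp : b * p = b := by rw [hb, mul_assoc, mul_assoc, hp, ← mul_assoc]
  -- notation
  set s : ℕ → ℝ := fun n => t / n with hs
  have hs_nonneg : ∀ n : ℕ, 0 ≤ s n := fun n => by positivity
  have hs_le : ∀ n : ℕ, 1 ≤ n → s n ≤ t := by
    intro n hn
    rw [hs]
    rw [div_le_iff₀ (by exact_mod_cast hn : (0:ℝ) < n)]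
    nlinarith [(by exact_mod_cast hn : (1:ℝ) ≤ n)]
  have hns : ∀ n : ℕ, 1 ≤ n → (n : ℝ) * s n = t := by
    intro n hn
    have hn0 : (n:ℝ) ≠ 0 := by exact_mod_cast (by omega : n ≠ 0)
    show (n:ℝ) * (t / n) = t
    field_simp [hs]
  set dd : ℕ → E := fun n => p * (exp (s n • a) - 1 - s n • a) * p with hdd
  set ee : ℕ → E := fun n => exp (s n • b) - 1 - s n • b with hee
  set xx : ℕ → E := fun n => p * exp (s n • a) * p with hxx
  set yy : ℕ → E := fun n => p + (exp (s n • b) - 1) with hyy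
  have hxx_eq : ∀ n, xx n = p + (s n • b + dd n) := by
    intro n
    rw [hxx, hdd, hb]
    simp only [mul_sub, sub_mul, mul_one, one_mul, mul_smul_comm, smul_mul_assoc, hp]
    abel
  have hyy_eq : ∀ n, yy n = p + (s n • b + ee n) := by
    intro n
    rw [hyy, hee]
    show p + (exp (s n • b) - 1) = p + (s n • b + (exp (s n • b) - 1 - s n • b))
    abel
  have hdiff : ∀ n, xx n - yy n = dd n - ee n := by
    intro n
    rw [hxx_eq n, hyy_eq n]
    abel
  -- the multiplicative structure
  have hpdx : ∀ n, p * (s n • b + dd n) = s n • b + dd n := by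
    intro n
    rw [mul_add, mul_smul_comm, hpb, hdd, ← mul_assoc, ← mul_assoc, hp]
  have hdxp : ∀ n, (s n • b + dd n) * p = s n • b + dd n := by
    intro n
    rw [add_mul, smul_mul_assoc, hbp, hdd, mul_assoc, mul_assoc, hp, ← mul_assoc]
  have hpb_smul : ∀ n, p * (s n • b) = s n • b := fun n => by rw [mul_smul_comm, hpb]
  have hbp_smul : ∀ n, (s n • b) * p = s n • b := fun n => by rw [smul_mul_assoc, hbp]
  have hpde : ∀ n, p * (s n • b + ee n) = s n • b + ee n := by
    intro n
    have h := aux_proj_mul_exp_sub_one (p := p) (c := s n • b) (hpb_smul n)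
    rw [mul_add, hpb_smul]
    congr 1
    have : ee n = (exp (s n • b) - 1) - s n • b := by rw [hee]
    rw [this, mul_sub, h, hpb_smul]
  have hdep : ∀ n, (s n • b + ee n) * p = s n • b + ee n := by
    intro n
    have h := aux_exp_sub_one_mul_proj (p := p) (c := s n • b) (hbp_smul n)
    rw [add_mul, hbp_smul]
    congr 1
    have : ee n = (exp (s n • b) - 1) - s n • b := by rw [hee]
    rw [this, sub_mul, h, hbp_smul]
  -- norm bounds
  set Ka : ℝ := ‖a‖ ^ 2 * Real.exp (t * ‖a‖) with hKa
  set Kb : ℝ := ‖b‖ ^ 2 * Real.exp (t * ‖b‖) with hKb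
  have hKa0 : 0 ≤ Ka := by positivity
  have hKb0 : 0 ≤ Kb := by positivity
  have hEa : ∀ n, 1 ≤ n → ‖exp (s n • a) - 1 - s n • a‖ ≤ s n ^ 2 * Ka := by
    intro n hn
    refine le_trans (aux_norm_exp_sub_one_sub_le _) ?_
    rw [norm_smul, Real.norm_eq_abs, abs_of_nonneg (hs_nonneg n)]
    rw [mul_pow, hKa]
    have h1' : Real.exp (s n * ‖a‖) ≤ Real.exp (t * ‖a‖) :=
      Real.exp_le_exp.2 (mul_le_mul_of_nonneg_right (hs_le n hn) (norm_nonneg _))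
    have := mul_le_mul_of_nonneg_left h1' (by positivity : (0:ℝ) ≤ s n ^ 2 * ‖a‖ ^ 2)
    calc s n ^ 2 * ‖a‖ ^ 2 * Real.exp (s n * ‖a‖)
        ≤ s n ^ 2 * ‖a‖ ^ 2 * Real.exp (t * ‖a‖) := this
      _ = s n ^ 2 * (‖a‖ ^ 2 * Real.exp (t * ‖a‖)) := by ring
  have hEb : ∀ n, 1 ≤ n → ‖exp (s n • b) - 1 - s n • b‖ ≤ s n ^ 2 * Kb := by
    intro n hn
    refine le_trans (aux_norm_exp_sub_one_sub_le _) ?_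
    rw [norm_smul, Real.norm_eq_abs, abs_of_nonneg (hs_nonneg n)]
    rw [mul_pow, hKb]
    have h1' : Real.exp (s n * ‖b‖) ≤ Real.exp (t * ‖b‖) :=
      Real.exp_le_exp.2 (mul_le_mul_of_nonneg_right (hs_le n hn) (norm_nonneg _))
    have := mul_le_mul_of_nonneg_left h1' (by positivity : (0:ℝ) ≤ s n ^ 2 * ‖b‖ ^ 2)
    calc s n ^ 2 * ‖b‖ ^ 2 * Real.exp (s n * ‖b‖)
        ≤ s n ^ 2 * ‖b‖ ^ 2 * Real.exp (t * ‖b‖) := this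
      _ = s n ^ 2 * (‖b‖ ^ 2 * Real.exp (t * ‖b‖)) := by ring
  have hdd_norm : ∀ n, 1 ≤ n → ‖dd n‖ ≤ s n ^ 2 * (‖p‖ ^ 2 * Ka) := by
    intro n hn
    rw [hdd]
    calc ‖p * (exp (s n • a) - 1 - s n • a) * p‖
        ≤ ‖p * (exp (s n • a) - 1 - s n • a)‖ * ‖p‖ := norm_mul_le _ _
      _ ≤ ‖p‖ * ‖exp (s n • a) - 1 - s n • a‖ * ‖p‖ :=
          mul_le_mul_of_nonneg_right (norm_mul_le _ _) (norm_nonneg _)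
      _ ≤ ‖p‖ * (s n ^ 2 * Ka) * ‖p‖ := by
          apply mul_le_mul_of_nonneg_right _ (norm_nonneg _)
          exact mul_le_mul_of_nonneg_left (hEa n hn) (norm_nonneg _)
      _ = s n ^ 2 * (‖p‖ ^ 2 * Ka) := by ring
  -- δ bound
  set Cδ : ℝ := ‖p‖ ^ 2 * Ka + Kb with hCδ
  have hCδ0 : 0 ≤ Cδ := by positivity
  have hδ : ∀ n, 1 ≤ n → ‖xx n - yy n‖ ≤ s n ^ 2 * Cδ := by
    intro n hn
    rw [hdiff n]
    calc ‖dd n - ee n‖ ≤ ‖dd n‖ + ‖ee n‖ := norm_sub_le _ _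
      _ ≤ s n ^ 2 * (‖p‖ ^ 2 * Ka) + s n ^ 2 * Kb := add_le_add (hdd_norm n hn) (hEb n hn)
      _ = s n ^ 2 * Cδ := by rw [hCδ]; ring
  -- uniform power bounds
  set C₁ : ℝ := ‖b‖ + t * (‖p‖ ^ 2 * Ka) with hC₁
  have hC₁0 : 0 ≤ C₁ := by positivity
  set C₂ : ℝ := ‖b‖ + t * Kb with hC₂
  have hC₂0 : 0 ≤ C₂ := by positivity
  set K₁ : ℝ := ‖p‖ + 1 + Real.exp (C₁ * t) with hK₁
  set K₂ : ℝ := ‖p‖ + 1 + Real.exp (C₂ * t) with hK₂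
  have hsmall_x : ∀ n, 1 ≤ n → ‖s n • b + dd n‖ ≤ s n * C₁ := by
    intro n hn
    calc ‖s n • b + dd n‖ ≤ ‖s n • b‖ + ‖dd n‖ := norm_add_le _ _
      _ ≤ s n * ‖b‖ + s n ^ 2 * (‖p‖ ^ 2 * Ka) := by
          rw [norm_smul, Real.norm_eq_abs, abs_of_nonneg (hs_nonneg n)]
          exact add_le_add le_rfl (hdd_norm n hn)
      _ ≤ s n * C₁ := by
          rw [hC₁]
          have h2 : s n ^ 2 * (‖p‖ ^ 2 * Ka) ≤ s n * (t * (‖p‖ ^ 2 * Ka)) := by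
            have h3 := mul_le_mul_of_nonneg_right (hs_le n hn)
              (mul_nonneg (hs_nonneg n) (by positivity : (0:ℝ) ≤ ‖p‖ ^ 2 * Ka))
            calc s n ^ 2 * (‖p‖ ^ 2 * Ka) = s n * (s n * (‖p‖ ^ 2 * Ka)) := by ring
              _ ≤ t * (s n * (‖p‖ ^ 2 * Ka)) := h3
              _ = s n * (t * (‖p‖ ^ 2 * Ka)) := by ring
          have h4 : s n * (‖b‖ + t * (‖p‖ ^ 2 * Ka)) = s n * ‖b‖ + s n * (t * (‖p‖ ^ 2 * Ka)) :=
            mul_add _ _ _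
          linarith
  have hsmall_y : ∀ n, 1 ≤ n → ‖s n • b + ee n‖ ≤ s n * C₂ := by
    intro n hn
    calc ‖s n • b + ee n‖ ≤ ‖s n • b‖ + ‖ee n‖ := norm_add_le _ _
      _ ≤ s n * ‖b‖ + s n ^ 2 * Kb := by
          rw [norm_smul, Real.norm_eq_abs, abs_of_nonneg (hs_nonneg n)]
          exact add_le_add le_rfl (hEb n hn)
      _ ≤ s n * C₂ := by
          rw [hC₂]
          have h2 : s n ^ 2 * Kb ≤ s n * (t * Kb) := by
            have h3 := mul_le_mul_of_nonneg_right (hs_le n hn)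
              (mul_nonneg (hs_nonneg n) hKb0)
            calc s n ^ 2 * Kb = s n * (s n * Kb) := by ring
              _ ≤ t * (s n * Kb) := h3
              _ = s n * (t * Kb) := by ring
          have h4 : s n * (‖b‖ + t * Kb) = s n * ‖b‖ + s n * (t * Kb) := mul_add _ _ _
          linarith
  have hpow_gen : ∀ (w : ℕ → E) (C : ℝ), 0 ≤ C →
      (∀ n, 1 ≤ n → p * w n = w n) → (∀ n, 1 ≤ n → w n * p = w n) →
      (∀ n, 1 ≤ n → ‖w n‖ ≤ s n * C) →
      ∀ n j, 1 ≤ n → j ≤ n → ‖(p + w n) ^ j‖ ≤ ‖p‖ + 1 + Real.exp (C * t) := by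
    intro w C hC hpw hwp hw n j hn hj
    have hb1 := aux_proj_add_pow_norm_le h1 hp (hpw n hn) (hwp n hn) (hw n hn) j
    refine le_trans hb1 ?_
    have h2 : (1 + s n * C) ^ j ≤ Real.exp (C * t) := by
      have hsc : 0 ≤ s n * C := mul_nonneg (hs_nonneg n) hC
      have h3 : (1 + s n * C) ^ j ≤ Real.exp (s n * C) ^ j := by
        apply pow_le_pow_left₀ (by linarith)
        linarith [Real.add_one_le_exp (s n * C)]
      refine le_trans h3 ?_
      rw [← Real.exp_nat_mul]
      apply Real.exp_le_exp.2
      have : (j : ℝ) * (s n * C) ≤ (n : ℝ) * (s n * C) := by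
        apply mul_le_mul_of_nonneg_right _ hsc
        exact_mod_cast hj
      refine le_trans this ?_
      rw [← mul_assoc, hns n hn, mul_comm]
    linarith
  have hx_pow : ∀ n j, 1 ≤ n → j ≤ n → ‖xx n ^ j‖ ≤ K₁ := by
    intro n j hn hj
    rw [hxx_eq n]
    exact hpow_gen (fun n => s n • b + dd n) C₁ hC₁0 (fun n hn => hpdx n)
      (fun n hn => hdxp n) hsmall_x n j hn hj
  have hy_pow : ∀ n j, 1 ≤ n → j ≤ n → ‖yy n ^ j‖ ≤ K₂ := by
    intro n j hn hj
    rw [hyy_eq n]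
    exact hpow_gen (fun n => s n • b + ee n) C₂ hC₂0 (fun n hn => hpde n)
      (fun n hn => hdep n) hsmall_y n j hn hj
  -- telescoping estimate
  have htel : ∀ n, 1 ≤ n → ‖xx n ^ (n-1) - yy n ^ (n-1)‖ ≤ K₁ * K₂ * Cδ * t ^ 2 / n := by
    intro n hn
    have hb1 := aux_norm_pow_sub_pow_le (x := xx n) (y := yy n) (K₁ := K₁) (K₂ := K₂)
      (δ := s n ^ 2 * Cδ) (n - 1)
      (fun j hj => hx_pow n j hn (by omega)) (fun j hj => hy_pow n j hn (by omega))
      (hδ n hn)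
    refine le_trans hb1 ?_
    have hK₁0 : 0 ≤ K₁ := le_trans (norm_nonneg _) (hx_pow n 0 hn (by omega))
    have hK₂0 : 0 ≤ K₂ := le_trans (norm_nonneg _) (hy_pow n 0 hn (by omega))
    have hn' : (0:ℝ) < n := by exact_mod_cast hn
    have hsval : s n = t / n := rfl
    have hstep : ((n:ℝ) - 1) * (s n ^ 2) ≤ t ^ 2 / n := by
      rw [hsval]
      have hne : (n:ℝ) ≠ 0 := ne_of_gt hn'
      calc ((n:ℝ) - 1) * ((t / n) ^ 2) ≤ (n:ℝ) * ((t / n) ^ 2) :=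
            mul_le_mul_of_nonneg_right (by linarith) (by positivity)
        _ = t ^ 2 / n := by field_simp
    have hcast : ((n - 1 : ℕ) : ℝ) ≤ (n:ℝ) - 1 + 0 := by
      have : ((n - 1 : ℕ) : ℝ) = (n:ℝ) - 1 := by
        have : (1:ℕ) ≤ n := hn
        push_cast [Nat.cast_sub this]
        ring
      linarith [this.le]
    calc ((n - 1 : ℕ) : ℝ) * (K₁ * K₂ * (s n ^ 2 * Cδ))
        ≤ ((n:ℝ) - 1) * (K₁ * K₂ * (s n ^ 2 * Cδ)) := by
          apply mul_le_mul_of_nonneg_right (by linarith) (by positivity)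
      _ = K₁ * K₂ * Cδ * (((n:ℝ) - 1) * s n ^ 2) := by ring
      _ ≤ K₁ * K₂ * Cδ * (t ^ 2 / n) := by
          apply mul_le_mul_of_nonneg_left hstep (by positivity)
      _ = K₁ * K₂ * Cδ * t ^ 2 / n := by ring
  -- limit of yy n ^ (n-1)
  have hyy_pow_eq : ∀ n, 2 ≤ n →
      yy n ^ (n - 1) = p - 1 + exp ((((n-1 : ℕ) : ℝ) * s n) • b) := by
    intro n hn
    obtain ⟨k, hk⟩ : ∃ k, n - 1 = k + 1 := ⟨n - 2, by omega⟩
    rw [hk]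
    have he := aux_proj_add_pow (p := p) (d := exp (s n • b) - 1) hp
      (aux_proj_mul_exp_sub_one (hpb_smul n)) (aux_exp_sub_one_mul_proj (hbp_smul n)) k
    rw [hyy, he]
    congr 1
    have h5 : (1 : E) + (exp (s n • b) - 1) = exp (s n • b) := by abel
    rw [h5, ← exp_nsmul]
    congr 1
    rw [← hk, ← Nat.cast_smul_eq_nsmul ℝ, smul_smul]
  have hreal : Tendsto (fun n : ℕ => ((n-1 : ℕ) : ℝ) * s n) atTop (𝓝 t) := by
    have h6 : Tendsto (fun n : ℕ => t - t / n) atTop (𝓝 t) := by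
      have := tendsto_const_div_atTop_nhds_zero_nat t
      have h7 := (tendsto_const_nhds (x := t) (f := atTop (α := ℕ))).sub this
      simpa using h7
    apply h6.congr'
    filter_upwards [eventually_ge_atTop 1] with n hn
    have hn' : (0:ℝ) < n := by exact_mod_cast hn
    have hcast : ((n - 1 : ℕ) : ℝ) = (n:ℝ) - 1 := by
      push_cast [Nat.cast_sub hn]
      ring
    rw [hcast, hs]
    field_simp
  have hyy_lim : Tendsto (fun n : ℕ => yy n ^ (n - 1)) atTop (𝓝 (p - 1 + exp (t • b))) := by
    have hcont : Continuous fun r : ℝ => p - 1 + exp (r • b) :=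
      continuous_const.add (exp_continuous.comp (continuous_id.smul continuous_const))
    have h8 : Tendsto (fun n : ℕ => p - 1 + exp ((((n-1 : ℕ) : ℝ) * s n) • b)) atTop
        (𝓝 (p - 1 + exp (t • b))) := (hcont.tendsto t).comp hreal
    apply h8.congr'
    filter_upwards [eventually_ge_atTop 2] with n hn
    exact (hyy_pow_eq n hn).symm
  -- limit of xx n ^ (n-1)
  have hxx_lim : Tendsto (fun n : ℕ => xx n ^ (n - 1)) atTop (𝓝 (p - 1 + exp (t • b))) := by
    have hzero : Tendsto (fun n : ℕ => xx n ^ (n-1) - yy n ^ (n-1)) atTop (𝓝 0) := by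
      apply squeeze_zero_norm' _ (tendsto_const_div_atTop_nhds_zero_nat (K₁ * K₂ * Cδ * t ^ 2))
      filter_upwards [eventually_ge_atTop 1] with n hn
      exact htel n hn
    have := hzero.add hyy_lim
    rw [zero_add] at this
    apply this.congr
    intro n
    abel
  -- limit of the exp factor
  have hexp_lim : Tendsto (fun n : ℕ => exp (s n • a)) atTop (𝓝 1) := by
    have hcont : Continuous fun r : ℝ => exp (r • a) :=
      exp_continuous.comp (continuous_id.smul continuous_const)
    have h9 : Tendsto (fun n : ℕ => exp (s n • a)) atTop (𝓝 (exp ((0:ℝ) • a))) :=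
      (hcont.tendsto 0).comp (tendsto_const_div_atTop_nhds_zero_nat t)
    rwa [zero_smul, exp_zero] at h9
  -- assemble
  have hprod := hexp_lim.mul hxx_lim
  rw [one_mul] at hprod
  apply hprod.congr'
  filter_upwards [eventually_ge_atTop 2] with n hn
  obtain ⟨m, hm⟩ : ∃ m, n = m + 2 := ⟨n - 2, by omega⟩
  rw [hm]
  have : m + 2 - 1 = m + 1 := by omega
  rw [this, hxx]
  exact (aux_up_pow hp (exp (s (m+2) • a)) m).symm


end MainOp

/-- If the generator `A` is bounded, then for every bounded projection `P` on `H`,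
every `x ∈ H` and every `t > 0` the sequence `(e^{(t/n)A} P)ⁿ x` converges in `H`. -/
theorem stmt_14 {H : Type*} [NormedAddCommGroup H] [InnerProductSpace ℂ H] [CompleteSpace H]
    (S : C0Semigroup H) (D : Set H) (A : H → H) (hgen : IsGenerator S D A)
    (hbdd : IsBoundedOperator D A) :
    ∀ P : H →L[ℂ] H, P.comp P = P → ∀ x : H, ∀ t : ℝ, 0 < t →
      ∃ y : H, Tendsto (fun n : ℕ => (((S.toFun (t / (n : ℝ))).comp P) ^ n) x) atTop (𝓝 y) := by
  intro P hP x t ht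
  obtain ⟨hD, a, ha⟩ := hbdd
  have htend : ∀ v : H, Tendsto (fun s : ℝ => (s : ℂ)⁻¹ • (S.toFun s v - v))
      (nhdsWithin 0 (Set.Ioi 0)) (𝓝 (a v)) := by
    intro v
    have h := hgen.2 v (by rw [hD]; trivial)
    rwa [ha v]
  have hSexp : ∀ n : ℕ, S.toFun (t / n) = NormedSpace.exp ((t / n) • a) := by
    intro n
    exact semigroup_eq_exp S a htend (t / n) (by positivity)
  have h1 : ‖(1 : H →L[ℂ] H)‖ ≤ 1 := ContinuousLinearMap.norm_id_le
  have hpp : P * P = P := hP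
  have hop := aux_main_op_limit h1 a P hpp t ht
  refine ⟨(P - 1 + NormedSpace.exp (t • (P * a * P))) x, ?_⟩
  have heval : Continuous (fun T : H →L[ℂ] H => T x) :=
    continuous_id.clm_apply continuous_const
  have hfinal := ((heval.tendsto _).comp hop)
  apply hfinal.congr
  intro n
  simp only [Function.comp_apply]
  rw [hSexp n]
  rfl
end
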